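/- Let X be a Grothendieck category satisfying (AB4*) (products are exact), let Y be a localizing subcategory of X, and let π : X → X/Y be the quotient functor. If Z is a closed subcategory of X which is Y-essentially stable, then π(Z) = {π(M) : M ∈ Z} is a closed subcategory of X/Y. -/

import Mathlib

open CategoryTheory CategoryTheory.Limits Opposite

universe v u

namespace Paper

variable {C : Type u} [Category.{v} C]

/-- An object `M` is compact if `Hom(M, -)` commutes with arbitrary (small) direct sums. -/
def IsCompactObj (M : C) : Prop :=
  ∀ ι : Type v, Nonempty (PreservesColimitsOfShape (Discrete ι) (coyoneda.obj (op M)))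

variable [Abelian C]

section
variable [HasColimits C]

/-- A full subcategory (given by its set of objects) is weakly closed if it is closed
under subobjects, quotient objects and arbitrary (small) direct sums. -/
structure IsWeaklyClosed (Z : Set C) : Prop where
  mem_of_mono : ∀ {A M : C} (f : A ⟶ M), Mono f → M ∈ Z → A ∈ Z
  mem_of_epi : ∀ {M B : C} (f : M ⟶ B), Epi f → M ∈ Z → B ∈ Z
  sigma_mem : ∀ {ι : Type v} (f : ι → C), (∀ i, f i ∈ Z) → (∐ f) ∈ Z

/-- Closure under arbitrary (small) products. -/
def ClosedUnderProducts [HasLimits C] (Z : Set C) : Prop :=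
  ∀ {ι : Type v} (f : ι → C), (∀ i, f i ∈ Z) → (∏ᶜ f) ∈ Z

/-- A closed subcategory: weakly closed and closed under products. -/
def IsClosedSub [HasLimits C] (Z : Set C) : Prop :=
  IsWeaklyClosed Z ∧ ClosedUnderProducts Z

/-- Closure under extensions. -/
def ClosedUnderExtensions (Y : Set C) : Prop :=
  ∀ S : ShortComplex C, S.ShortExact → S.X₁ ∈ Y → S.X₃ ∈ Y → S.X₂ ∈ Y

/-- A localizing subcategory: weakly closed and closed under extensions. -/
def IsLocalizing (Y : Set C) : Prop :=
  IsWeaklyClosed Y ∧ ClosedUnderExtensions Y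

/-- The full subcategory generated by a class of objects `G`: all quotient objects
of (small) direct sums of objects of `G`. -/
def generatedBy (G : Set C) : Set C :=
  { M | ∃ (ι : Type v) (f : ι → C), (∀ i, f i ∈ G) ∧ ∃ p : (∐ f) ⟶ M, Epi p }

end

/-- A filter of subobjects of an object: nonempty, upward closed, and closed under
finite intersections. -/
def IsFilterOn {O : C} (F : Set (Subobject O)) : Prop :=
  F.Nonempty ∧ (∀ {I J : Subobject O}, I ∈ F → I ≤ J → J ∈ F) ∧
    ∀ {I J : Subobject O}, I ∈ F → J ∈ F → I ⊓ J ∈ F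

/-- A principal filter consists of all subobjects containing a fixed one. -/
def IsPrincipalFilter {O : C} (F : Set (Subobject O)) : Prop :=
  ∃ I : Subobject O, F = { J | I ≤ J }

variable {A : Type v}

/-- A filter system in a family of objects. -/
def IsFilterSystem (O : A → C) (F : ∀ α, Set (Subobject (O α))) : Prop :=
  (∀ α, IsFilterOn (F α)) ∧
    ∀ (α β : A) (f : O α ⟶ O β), ∀ J ∈ F β, (Subobject.pullback f).obj J ∈ F α

/-- An ideal in a family of generators: a choice of subobject `I α ⊆ O α` for each `α`
such that `f (I α) ⊆ I β` for every morphism `f : O α ⟶ O β`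
(expressed as `I α ≤ f⁻¹ (I β)`). -/
def IsIdealIn (O : A → C) (I : ∀ α, Subobject (O α)) : Prop :=
  ∀ (α β : A) (f : O α ⟶ O β), I α ≤ (Subobject.pullback f).obj (I β)

/-- The quotient object `O/I` of `O` by a subobject `I`. -/
noncomputable def quotBy {O : C} (I : Subobject O) : C := cokernel I.arrow

/-- The weakly closed subcategory generated by the objects `O α / I`, `I ∈ F α`. -/
def wcOfFilterSystem [HasColimits C] (O : A → C) (F : ∀ α, Set (Subobject (O α))) : Set C :=
  generatedBy { M | ∃ (α : A) (I : Subobject (O α)), I ∈ F α ∧ Nonempty (quotBy I ≅ M) }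

/-- The filter system associated to a subcategory `Z`: `F α = {I | O α / I ∈ Z}`. -/
def filterOf (O : A → C) (Z : Set C) (α : A) : Set (Subobject (O α)) :=
  { I | quotBy I ∈ Z }

section QuotientCat

variable {D : Type u} [Category.{v} D]

/-- The image `π(Z)` of a subcategory, as a full subcategory of the target
(closed under isomorphism). -/
def imageSub (π : C ⥤ D) (Z : Set C) : Set D := { N | ∃ M ∈ Z, Nonempty (π.obj M ≅ N) }

/-- The preimage `π⁻¹(𝒵)` of a subcategory. -/
def preimageSub (π : C ⥤ D) (Z : Set D) : Set C := { M | π.obj M ∈ Z }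

/-- `M` is `Y`-torsionfree if it has no nonzero subobject belonging to `Y`. -/
def IsTorsionFree (Y : Set C) (M : C) : Prop :=
  ∀ (N : C) (f : N ⟶ M), Mono f → N ∈ Y → IsZero N

/-- `Z` is `Y`-essentially stable if `ωπ(M) ∈ Z` for all `M ∈ Z`. -/
def EssStable (π : C ⥤ D) (ω : D ⥤ C) (Z : Set C) : Prop :=
  ∀ M ∈ Z, ω.obj (π.obj M) ∈ Z

/-- `Z'`: the full subcategory generated by the `Y`-torsionfree objects of `Z`. -/
def torsPart [HasColimits C] (Y Z : Set C) : Set C :=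
  generatedBy { M | M ∈ Z ∧ IsTorsionFree Y M }

/-- `Z` is `Y`-torsionfree generated if every object of `Z` is a quotient of a direct sum
of `Y`-torsionfree objects of `Z`. -/
def TorsionfreeGenerated [HasColimits C] (Y Z : Set C) : Prop :=
  Z ⊆ torsPart Y Z

/-- `Z` is `Y`-weakly closed: weakly closed, `Y`-essentially stable
and `Y`-torsionfree generated. -/
def IsYWeaklyClosed [HasColimits C] (π : C ⥤ D) (ω : D ⥤ C) (Y Z : Set C) : Prop :=
  IsWeaklyClosed Z ∧ EssStable π ω Z ∧ TorsionfreeGenerated Y Z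

/-- `Z` is `Y`-closed: closed, `Y`-essentially stable and `Y`-torsionfree generated. -/
def IsYClosed [HasLimits C] [HasColimits C] (π : C ⥤ D) (ω : D ⥤ C) (Y Z : Set C) : Prop :=
  IsClosedSub Z ∧ EssStable π ω Z ∧ TorsionfreeGenerated Y Z

end QuotientCat

/-- The Gabriel product `Z * W`: all objects `P` fitting in a short exact sequence
`0 → M → P → N → 0` with `M ∈ W` and `N ∈ Z`. -/
def gabrielProd (Z W : Set C) : Set C :=
  { P | ∃ S : ShortComplex C, S.ShortExact ∧ S.X₁ ∈ W ∧ S.X₃ ∈ Z ∧ Nonempty (S.X₂ ≅ P) }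

/-- `Isat` is the `Y`-saturation of `I` inside `O`: the largest subobject `J ⊇ I`
with `J/I ∈ Y`; that is, `Isat/I = τ(O/I)`. -/
def IsSaturationOf (Y : Set C) {O : C} (I Isat : Subobject O) : Prop :=
  ∃ h : I ≤ Isat, cokernel (Subobject.ofLE I Isat h) ∈ Y ∧
    ∀ (J : Subobject O) (hJ : I ≤ J), cokernel (Subobject.ofLE I J hJ) ∈ Y → J ≤ Isat


/-- The subcategory generated by the objects `O α / I α` for an ideal `I`. -/
def wcOfIdeal [HasColimits C] (O : A → C) (I : ∀ α, Subobject (O α)) : Set C :=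
  generatedBy { M | ∃ α : A, Nonempty (quotBy (I α) ≅ M) }

/-- The union `Z₁ ∪ Z₂` of two weakly closed subcategories: explicitly, all
subquotients of objects `M ⊞ N` with `M ∈ Z₁` and `N ∈ Z₂`. -/
def unionWC (Z₁ Z₂ : Set C) : Set C :=
  { P | ∃ (M N Q : C) (i : Q ⟶ M ⊞ N) (p : Q ⟶ P), M ∈ Z₁ ∧ N ∈ Z₂ ∧ Mono i ∧ Epi p }

/-!
As `ω` is fully faithful, `πω ≅ 𝟭`; hence for an essentially stable `Z`, an object `N` lies in
`π(Z)` iff `ωN ∈ Z`. Closure of `π(Z)` under subobjects and products follows because `ω`, a right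
adjoint, preserves monomorphisms and products; under direct sums because `π`, a left adjoint,
preserves them. A quotient `B` of `N` is `π` of the image of `ωN ⟶ ωB`, since `π` is exact.
-/

section Localization

variable {X D : Type u} [Category.{v} X] [Category.{v} D] {π : X ⥤ D} {ω : D ⥤ X}
  {Z : Set X}

theorem IsWeaklyClosed.mem_of_iso [HasColimits X] (hZ : IsWeaklyClosed Z) {M N : X} (e : M ≅ N)
    (hN : N ∈ Z) : M ∈ Z :=
  hZ.mem_of_mono e.hom inferInstance hN

theorem obj_mem_of_mem_imageSub [HasColimits X] (hZ : IsWeaklyClosed Z)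
    (hZes : EssStable π ω Z) {N : D} (hN : N ∈ imageSub π Z) : ω.obj N ∈ Z := by
  obtain ⟨M, hM, ⟨e⟩⟩ := hN
  exact hZ.mem_of_iso (ω.mapIso e.symm) (hZes M hM)

theorem mem_imageSub_of_obj_mem (adj : π ⊣ ω) [ω.Full] [ω.Faithful] {N : D}
    (hN : ω.obj N ∈ Z) : N ∈ imageSub π Z :=
  ⟨ω.obj N, hN, ⟨asIso (adj.counit.app N)⟩⟩

theorem mem_imageSub_iff [HasColimits X] (adj : π ⊣ ω) [ω.Full] [ω.Faithful]
    (hZ : IsWeaklyClosed Z) (hZes : EssStable π ω Z) {N : D} :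
    N ∈ imageSub π Z ↔ ω.obj N ∈ Z :=
  ⟨obj_mem_of_mem_imageSub hZ hZes, mem_imageSub_of_obj_mem adj⟩

theorem isIso_map_image_ι [HasImages X] [Balanced D] [π.PreservesMonomorphisms] {M M' : X}
    (g : M ⟶ M') [Epi (π.map g)] : IsIso (π.map (image.ι g)) := by
  have : Epi (π.map (factorThruImage g) ≫ π.map (image.ι g)) := by
    rwa [← π.map_comp, image.fac]
  have : Epi (π.map (image.ι g)) := epi_of_epi (π.map (factorThruImage g)) _
  exact isIso_of_mono_of_epi _

theorem mem_imageSub_of_mono [HasColimits X] (adj : π ⊣ ω) [ω.Full] [ω.Faithful]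
    (hZ : IsWeaklyClosed Z) (hZes : EssStable π ω Z) {A N : D} (f : A ⟶ N) [Mono f]
    (hN : N ∈ imageSub π Z) : A ∈ imageSub π Z := by
  have := Functor.preservesMonomorphisms_of_adjunction adj
  rw [mem_imageSub_iff adj hZ hZes] at hN ⊢
  exact hZ.mem_of_mono (ω.map f) inferInstance hN

theorem mem_imageSub_of_epi [Abelian X] [HasColimits X] [Balanced D] [π.PreservesMonomorphisms]
    (adj : π ⊣ ω) [ω.Full] [ω.Faithful] (hZ : IsWeaklyClosed Z) (hZes : EssStable π ω Z)
    {N B : D} (f : N ⟶ B) [Epi f] (hN : N ∈ imageSub π Z) : B ∈ imageSub π Z := by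
  rw [mem_imageSub_iff adj hZ hZes] at hN
  have : Epi (π.map (ω.map f)) := by
    rw [← epi_comp_iff_of_isIso _ (adj.counit.app B), adj.counit_naturality f]
    infer_instance
  have := isIso_map_image_ι (π := π) (ω.map f)
  exact ⟨image (ω.map f), hZ.mem_of_epi (factorThruImage _) inferInstance hN,
    ⟨asIso (π.map (image.ι (ω.map f))) ≪≫ asIso (adj.counit.app B)⟩⟩

theorem sigma_mem_imageSub [HasColimits X] [HasColimits D] (adj : π ⊣ ω)
    (hZ : IsWeaklyClosed Z) {ι : Type v} (f : ι → D) (hf : ∀ i, f i ∈ imageSub π Z) :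
    ∐ f ∈ imageSub π Z := by
  have := adj.leftAdjoint_preservesColimits
  choose M hM e using hf
  exact ⟨∐ M, hZ.sigma_mem M hM, ⟨PreservesCoproduct.iso π M ≪≫ Sigma.mapIso fun i => (e i).some⟩⟩

theorem closedUnderProducts_imageSub [HasColimits X] [HasLimits X] [HasLimits D]
    (adj : π ⊣ ω) [ω.Full] [ω.Faithful] (hZ : IsWeaklyClosed Z) (hZprod : ClosedUnderProducts Z)
    (hZes : EssStable π ω Z) : ClosedUnderProducts (imageSub π Z) := by
  intro ι f hf
  have := adj.rightAdjoint_preservesLimits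
  simp only [mem_imageSub_iff adj hZ hZes] at hf ⊢
  exact hZ.mem_of_iso (PreservesProduct.iso ω f) (hZprod _ hf)

theorem IsWeaklyClosed.imageSub [Abelian X] [HasColimits X] [Balanced D] [HasColimits D]
    [π.PreservesMonomorphisms] (adj : π ⊣ ω) [ω.Full] [ω.Faithful] (hZ : IsWeaklyClosed Z)
    (hZes : EssStable π ω Z) : IsWeaklyClosed (imageSub π Z) where
  mem_of_mono f _ := mem_imageSub_of_mono adj hZ hZes f
  mem_of_epi f _ := mem_imageSub_of_epi adj hZ hZes f
  sigma_mem := sigma_mem_imageSub adj hZ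

theorem IsClosedSub.imageSub [Abelian X] [HasColimits X] [HasLimits X] [Balanced D]
    [HasColimits D] [HasLimits D] [π.PreservesMonomorphisms] (adj : π ⊣ ω) [ω.Full]
    [ω.Faithful] (hZ : IsClosedSub Z) (hZes : EssStable π ω Z) : IsClosedSub (imageSub π Z) :=
  ⟨hZ.1.imageSub adj hZes, closedUnderProducts_imageSub adj hZ.1 hZ.2 hZes⟩

end Localization

theorem statement_9_general {X : Type u} [Category.{v} X] [Abelian X]
    [HasLimits X] [HasColimits X]
    {D : Type u} [Category.{v} D] [Abelian D] [HasLimits D] [HasColimits D]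
    (π : X ⥤ D) (ω : D ⥤ X) (adj : π ⊣ ω) [PreservesFiniteLimits π]
    [ω.Full] [ω.Faithful]
    (Z : Set X) (hZ : IsClosedSub Z) (hZes : EssStable π ω Z) :
    IsClosedSub (imageSub π Z) :=
  hZ.imageSub adj hZes

/-- If `X` satisfies (AB4*) and `Z` is a closed subcategory of `X` which
is `Y`-essentially stable, then `π(Z)` is a closed subcategory of `X/Y`. -/
theorem statement_9 {X : Type u} [Category.{v} X] [Abelian X]
    [HasLimits X] [HasColimits X] [HasFilteredColimits X] [AB5 X]
    [HasProducts X] [AB4Star X]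
    (hgen : ∃ G : X, IsSeparator G)
    {D : Type u} [Category.{v} D] [Abelian D] [HasLimits D] [HasColimits D]
    (Y : Set X) (hYloc : IsLocalizing Y)
    (π : X ⥤ D) (ω : D ⥤ X) (adj : π ⊣ ω) [PreservesFiniteLimits π]
    [ω.Full] [ω.Faithful]
    (hker : ∀ M : X, M ∈ Y ↔ IsZero (π.obj M))
    (Z : Set X) (hZ : IsClosedSub Z) (hZes : EssStable π ω Z) :
    IsClosedSub (imageSub π Z) :=
  statement_9_general π ω adj Z hZ hZes

end Paper
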